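/- For every n > 1, the Černý automaton C_n is synchronizing and the minimum length of a reset word for C_n is exactly (n−1)²: C_n has a reset word of length (n−1)², and every reset word for C_n has length at least (n−1)². -/

import Mathlib

/-- Apply a word (list of letters) to a state of a DFA with transition function `δ`. -/
def applyWord {Q A : Type*} (δ : Q → A → Q) (q : Q) : List A → Q
  | [] => q
  | a :: w => applyWord δ (δ q a) w

/-- The history (list) of letters played after `n` moves of the synchronization game,
when Alice uses strategy `σA` and Bob uses strategy `σB`; Alice moves first, i.e.
the letters at even indices are chosen by Alice and those at odd indices by Bob. -/
def playHist {A : Type*} (σA σB : List A → A) : ℕ → List A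
  | 0 => []
  | n + 1 =>
      let h := playHist σA σB n
      h ++ [if n % 2 = 0 then σA h else σB h]

/-- `w` synchronizes the position `P` (a set of states holding coins) to a single state. -/
def IsResetFrom {Q A : Type*} [DecidableEq Q] (δ : Q → A → Q) (P : Finset Q)
    (w : List A) : Prop :=
  (P.image fun q => applyWord δ q w).card = 1

/-- Alice has a winning strategy in the synchronization game starting from position `P`. -/
def AliceWins {Q A : Type*} [DecidableEq Q] (δ : Q → A → Q) (P : Finset Q) : Prop :=
  ∃ σA : List A → A, ∀ σB : List A → A, ∃ k : ℕ,
    IsResetFrom δ P (playHist σA σB k)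

/-- Alice has a strategy in the synchronization game starting from position `P` that
guarantees reaching a singleton position in a play in which Alice has chosen at most
`m` letters (after `k` letters in total, Alice has chosen `(k + 1) / 2` of them). -/
def AliceWinsWithin {Q A : Type*} [DecidableEq Q] (δ : Q → A → Q) (P : Finset Q)
    (m : ℕ) : Prop :=
  ∃ σA : List A → A, ∀ σB : List A → A, ∃ k : ℕ,
    IsResetFrom δ P (playHist σA σB k) ∧ (k + 1) / 2 ≤ m

/-- Bob has a winning strategy in the synchronization game starting from position `P`:
against every strategy of Alice the position never becomes a singleton. -/
def BobWins {Q A : Type*} [DecidableEq Q] (δ : Q → A → Q) (P : Finset Q) : Prop :=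
  ∃ σB : List A → A, ∀ σA : List A → A, ∀ k : ℕ,
    ¬ IsResetFrom δ P (playHist σA σB k)

/-- The Černý automaton `C_n`: states are residues modulo `n`, the letter `a` (here
`false`) sends `0` to `1` and fixes every other state, and the letter `b` (here `true`)
adds `1` modulo `n`. -/
def cernyStep (n : ℕ) : ZMod n → Bool → ZMod n
  | m, false => if m = 0 then 1 else m
  | m, true => m + 1

/-! Backwards, `a` turns the arc `{1, …, m}` into `{0, …, m}` and `b^(n-1)` rotates that to
`{1, …, m + 1}`, so every state is sent to `1` by `a (b^(n-1) a)^(n-2)`, of length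
`1 + (n - 2) n = (n - 1)²`.

Conversely, the preimages of a state under the suffixes of a reset word are arcs `arc c m`
(starting at `c`, of size `m`). Only `a` enlarges an arc, by one state and only if it starts
at `1`; it then starts at `0` and needs `n - 1` letters `b` to start at `1` again. Hence the
potential `(n - m) n - (-c).val` drops by at most one per prepended letter; it is at least
`(n - 1)²` on a singleton and `0` on the whole state set. -/

section applyWord

variable {Q A : Type*} (δ : Q → A → Q)

theorem applyWord_append (u v : List A) (q : Q) :
    applyWord δ q (u ++ v) = applyWord δ (applyWord δ q u) v := by
  induction u generalizing q with
  | nil => rfl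
  | cons a u ih => exact ih (δ q a)

theorem preimage_applyWord_nil (S : Set Q) : (applyWord δ · []) ⁻¹' S = S :=
  rfl

theorem preimage_applyWord_cons (a : A) (w : List A) (S : Set Q) :
    (applyWord δ · (a :: w)) ⁻¹' S = (δ · a) ⁻¹' ((applyWord δ · w) ⁻¹' S) :=
  rfl

theorem preimage_applyWord_append (u v : List A) (S : Set Q) :
    (applyWord δ · (u ++ v)) ⁻¹' S = (applyWord δ · u) ⁻¹' ((applyWord δ · v) ⁻¹' S) := by
  ext q
  simp [applyWord_append]

theorem isResetFrom_univ_iff [Fintype Q] [Nonempty Q] [DecidableEq Q] (w : List A) :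
    IsResetFrom δ Finset.univ w ↔ ∃ f, (applyWord δ · w) ⁻¹' {f} = Set.univ := by
  simp only [IsResetFrom, Finset.card_eq_one, Finset.eq_singleton_iff_unique_mem,
    Finset.mem_image, Finset.mem_univ, true_and, forall_exists_index, forall_apply_eq_imp_iff,
    Set.eq_univ_iff_forall, Set.mem_preimage, Set.mem_singleton_iff]
  exact ⟨fun ⟨f, _, hf⟩ => ⟨f, hf⟩, fun ⟨f, hf⟩ => ⟨f, ⟨Classical.arbitrary Q, hf _⟩, hf⟩⟩

end applyWord

namespace ZMod

variable {n : ℕ}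

theorem natCast_sub_one_eq_neg_one [NeZero n] : ((n - 1 : ℕ) : ZMod n) = -1 := by
  rw [Nat.cast_sub NeZero.one_le, natCast_self, Nat.cast_one, zero_sub]

theorem val_neg_one' [NeZero n] : (-1 : ZMod n).val = n - 1 := by
  rw [← natCast_sub_one_eq_neg_one, val_cast_of_lt (Nat.sub_lt (NeZero.pos n) one_pos)]

theorem val_add_one_le (x : ZMod n) : (x + 1).val ≤ x.val + 1 :=
  (val_add_le x 1).trans <|
    Nat.add_le_add_left (by simpa [val_one_eq_one_mod] using Nat.mod_le 1 n) _

end ZMod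

namespace Cerny

variable {n : ℕ} {c q : ZMod n} {m : ℕ}

def arc (c : ZMod n) (m : ℕ) : Set (ZMod n) :=
  (fun i : ℕ => c + i) '' Set.Iio m

theorem mem_arc : q ∈ arc c m ↔ ∃ i < m, c + i = q :=
  Iff.rfl

theorem add_natCast_mem_arc_iff {k : ℕ} (hk : k < n) : c + k ∈ arc c m ↔ k < m := by
  refine ⟨fun ⟨i, hi, h⟩ => ?_, fun h => ⟨k, h, rfl⟩⟩
  have := (ZMod.natCast_eq_natCast_iff' i k n).1 (add_left_cancel h)
  rw [Nat.mod_eq_of_lt hk] at this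
  exact this ▸ (Nat.mod_le i n).trans_lt hi

theorem arc_one : arc c 1 = {c} := by
  ext q
  simp [mem_arc, eq_comm]

theorem arc_sub_one_succ : arc (c - 1) (m + 1) = insert (c - 1) (arc c m) := by
  ext q
  simp only [mem_arc, Set.mem_insert_iff]
  constructor
  · rintro ⟨_ | i, hi, rfl⟩
    · simp
    · exact Or.inr ⟨i, by omega, by push_cast; ring⟩
  · rintro (rfl | ⟨i, hi, rfl⟩)
    · exact ⟨0, by omega, by simp⟩
    · exact ⟨i + 1, by omega, by push_cast; ring⟩

theorem arc_succ : arc c (m + 1) = insert (c + m) (arc c m) := by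
  ext q
  simp only [mem_arc, Set.mem_insert_iff, Nat.lt_succ_iff_lt_or_eq, or_and_right, exists_or,
    exists_eq_left, eq_comm (a := q)]
  exact or_comm

theorem arc_eq_univ_iff [NeZero n] (hm : m ≤ n) : arc c m = Set.univ ↔ m = n := by
  constructor
  · intro h
    by_contra hne
    have := h ▸ Set.mem_univ (c + m)
    exact (add_natCast_mem_arc_iff (lt_of_le_of_ne hm hne)).1 this |>.false
  · rintro rfl
    exact Set.eq_univ_of_forall fun q => ⟨(q - c).val, ZMod.val_lt _, by simp⟩

theorem preimage_add_arc (d : ZMod n) : (· + d) ⁻¹' arc c m = arc (c - d) m := by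
  ext q
  simp only [Set.mem_preimage, mem_arc]
  exact exists_congr fun i => and_congr_right fun _ => by
    constructor <;> intro h <;> linear_combination h

theorem eq_of_mem_arc_of_sub_one_notMem (hq : q ∈ arc c m) (h : q - 1 ∉ arc c m) : q = c := by
  obtain ⟨_ | i, hi, rfl⟩ := mem_arc.1 hq
  · simp
  · exact absurd (mem_arc.2 ⟨i, by omega, by push_cast; ring⟩) h

theorem arc_diff_singleton_of_add_one_notMem (hm : m ≤ n) (hq : q ∈ arc c m)
    (h : q + 1 ∉ arc c m) : arc c m \ {q} = arc c (m - 1) := by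
  obtain ⟨i, hi, rfl⟩ := mem_arc.1 hq
  obtain rfl : m = i + 1 := by
    by_contra hne
    exact h (mem_arc.2 ⟨i + 1, by omega, by push_cast; ring⟩)
  rw [arc_succ, Set.insert_sdiff_self_of_notMem ((add_natCast_mem_arc_iff (by omega)).not.2
    (lt_irrefl i)), Nat.add_sub_cancel]

theorem preimage_cernyStep_true_arc : (cernyStep n · true) ⁻¹' arc c m = arc (c - 1) m :=
  preimage_add_arc 1

theorem preimage_cernyStep_false_of_one_mem {S : Set (ZMod n)} (h : 1 ∈ S) :
    (cernyStep n · false) ⁻¹' S = insert 0 S := by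
  ext q
  by_cases hq : q = 0 <;> simp [cernyStep, hq, h]

theorem preimage_cernyStep_false_of_one_notMem {S : Set (ZMod n)} (h : 1 ∉ S) :
    (cernyStep n · false) ⁻¹' S = S \ {0} := by
  ext q
  by_cases hq : q = 0 <;> simp [cernyStep, hq, h]

theorem preimage_cernyStep_false_arc_one (hm : 0 < m) :
    (cernyStep n · false) ⁻¹' arc 1 m = arc 0 (m + 1) := by
  rw [preimage_cernyStep_false_of_one_mem (mem_arc.2 ⟨0, hm, by simp⟩)]
  simpa using (arc_sub_one_succ (c := (1 : ZMod n)) (m := m)).symm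

def cernyBlock (n : ℕ) : List Bool :=
  List.replicate (n - 1) true ++ [false]

def cernyResetWord (n : ℕ) : List Bool :=
  false :: (List.replicate (n - 2) (cernyBlock n)).flatten

theorem length_cernyResetWord (hn : 1 < n) : (cernyResetWord n).length = (n - 1) ^ 2 := by
  obtain ⟨k, rfl⟩ : ∃ k, n = k + 2 := ⟨n - 2, by omega⟩
  simp [cernyResetWord, cernyBlock, List.length_flatten]
  ring

theorem applyWord_cernyStep_replicate_true (k : ℕ) (q : ZMod n) :
    applyWord (cernyStep n) q (List.replicate k true) = q + k := by
  induction k generalizing q with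
  | zero => simp [applyWord]
  | succ k ih =>
    rw [List.replicate_succ, applyWord, ih, cernyStep]
    push_cast
    ring

theorem preimage_cernyBlock_arc_one [NeZero n] (hm : 0 < m) :
    (applyWord (cernyStep n) · (cernyBlock n)) ⁻¹' arc 1 m = arc 1 (m + 1) := by
  have hrot :
      (applyWord (cernyStep n) · (List.replicate (n - 1) true)) = (· + (-1 : ZMod n)) := by
    ext q
    rw [applyWord_cernyStep_replicate_true, ZMod.natCast_sub_one_eq_neg_one]
  rw [cernyBlock, preimage_applyWord_append, preimage_applyWord_cons, preimage_applyWord_nil,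
    preimage_cernyStep_false_arc_one hm, hrot, preimage_add_arc, zero_sub, neg_neg]

theorem preimage_cernyBlocks [NeZero n] (k : ℕ) :
    (applyWord (cernyStep n) · (List.replicate k (cernyBlock n)).flatten) ⁻¹' {1} =
      arc 1 (k + 1) := by
  induction k with
  | zero => exact arc_one.symm
  | succ k ih =>
    rw [List.replicate_succ, List.flatten_cons, preimage_applyWord_append, ih,
      preimage_cernyBlock_arc_one k.succ_pos]

theorem isResetFrom_cernyResetWord [NeZero n] (hn : 1 < n) :
    IsResetFrom (cernyStep n) Finset.univ (cernyResetWord n) := by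
  refine (isResetFrom_univ_iff _ _).2 ⟨1, ?_⟩
  rw [cernyResetWord, preimage_applyWord_cons, preimage_cernyBlocks,
    preimage_cernyStep_false_arc_one (by omega), arc_eq_univ_iff (by omega)]
  omega

def arcPotential (c : ZMod n) (m : ℕ) : ℕ :=
  (n - m) * n - (-c).val

theorem arcPotential_le_arcPotential_sub_one : arcPotential c m ≤ arcPotential (c - 1) m + 1 := by
  have := ZMod.val_add_one_le (-c)
  rw [arcPotential, arcPotential, neg_sub', sub_neg_eq_add]
  omega

theorem arcPotential_one_le_arcPotential_zero_succ [NeZero n] (hm : m < n) :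
    arcPotential (1 : ZMod n) m ≤ arcPotential (0 : ZMod n) (m + 1) + 1 := by
  obtain ⟨k, hk⟩ : ∃ k, n - m = k + 1 := ⟨n - m - 1, by omega⟩
  rw [arcPotential, arcPotential, ZMod.val_neg_one', neg_zero, ZMod.val_zero, hk,
    show n - (m + 1) = k by omega, Nat.succ_mul]
  omega

theorem arcPotential_antitone : Antitone (arcPotential c) := fun _ _ h =>
  Nat.sub_le_sub_right (Nat.mul_le_mul_right n (Nat.sub_le_sub_left h n)) _

theorem sq_le_arcPotential_one [NeZero n] : (n - 1) ^ 2 ≤ arcPotential c 1 := by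
  obtain ⟨k, rfl⟩ : ∃ k, n = k + 1 := ⟨n - 1, (Nat.sub_add_cancel NeZero.one_le).symm⟩
  have := ZMod.val_lt (-c)
  rw [arcPotential, Nat.add_sub_cancel, Nat.mul_succ, sq]
  omega

theorem arcPotential_full (c : ZMod n) : arcPotential c n = 0 := by
  simp [arcPotential]

theorem exists_arc_eq_preimage_cernyStep_false [NeZero n] (hm : m ≤ n) :
    ∃ c' m', m' ≤ n ∧ (cernyStep n · false) ⁻¹' arc c m = arc c' m' ∧
      arcPotential c m ≤ arcPotential c' m' + 1 := by
  by_cases h1 : (1 : ZMod n) ∈ arc c m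
  · by_cases h0 : (0 : ZMod n) ∈ arc c m
    · rw [preimage_cernyStep_false_of_one_mem h1, Set.insert_eq_of_mem h0]
      exact ⟨c, m, hm, rfl, Nat.le_succ _⟩
    obtain rfl : 1 = c := eq_of_mem_arc_of_sub_one_notMem h1 (by rwa [sub_self])
    have hmn : m < n := lt_of_le_of_ne hm fun h => h0 ((arc_eq_univ_iff hm).2 h ▸ trivial)
    obtain ⟨i, hi, -⟩ := mem_arc.1 h1
    exact ⟨0, m + 1, hmn, preimage_cernyStep_false_arc_one (by omega),
      arcPotential_one_le_arcPotential_zero_succ hmn⟩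
  · rw [preimage_cernyStep_false_of_one_notMem h1]
    by_cases h0 : (0 : ZMod n) ∈ arc c m
    · refine ⟨c, m - 1, by omega, arc_diff_singleton_of_add_one_notMem hm h0 (by rwa [zero_add]),
        (arcPotential_antitone (Nat.sub_le m 1)).trans (Nat.le_succ _)⟩
    · exact ⟨c, m, hm, Set.sdiff_singleton_eq_self h0, Nat.le_succ _⟩

theorem exists_arc_eq_preimage_cernyStep [NeZero n] (x : Bool) (hm : m ≤ n) :
    ∃ c' m', m' ≤ n ∧ (cernyStep n · x) ⁻¹' arc c m = arc c' m' ∧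
      arcPotential c m ≤ arcPotential c' m' + 1 := by
  cases x
  · exact exists_arc_eq_preimage_cernyStep_false hm
  · exact ⟨c - 1, m, hm, preimage_cernyStep_true_arc, arcPotential_le_arcPotential_sub_one⟩

theorem exists_arc_eq_preimage_applyWord [NeZero n] (hm : m ≤ n) (w : List Bool) :
    ∃ c' m', m' ≤ n ∧ (applyWord (cernyStep n) · w) ⁻¹' arc c m = arc c' m' ∧
      arcPotential c m ≤ arcPotential c' m' + w.length := by
  induction w with
  | nil => exact ⟨c, m, hm, rfl, le_self_add⟩
  | cons x w ih =>
    obtain ⟨c', m', hm', hpre, hle⟩ := ih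
    obtain ⟨c'', m'', hm'', hpre', hle'⟩ := exists_arc_eq_preimage_cernyStep x hm'
    refine ⟨c'', m'', hm'', by rw [preimage_applyWord_cons, hpre, hpre'], ?_⟩
    rw [List.length_cons]
    omega

theorem sq_le_length_of_isResetFrom [NeZero n] {w : List Bool}
    (hw : IsResetFrom (cernyStep n) Finset.univ w) : (n - 1) ^ 2 ≤ w.length := by
  obtain ⟨f, hf⟩ := (isResetFrom_univ_iff _ w).1 hw
  obtain ⟨c, m, hm, hpre, hle⟩ := exists_arc_eq_preimage_applyWord (c := f) NeZero.one_le w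
  rw [arc_one, hf, eq_comm, arc_eq_univ_iff hm] at hpre
  subst hpre
  have := sq_le_arcPotential_one (c := f)
  rw [arcPotential_full, zero_add] at hle
  omega

end Cerny

/-- For every `n > 1`, the Černý automaton `C_n` is synchronizing, it has a reset word of
length `(n-1)²`, and every reset word for `C_n` has length at least `(n-1)²`. -/
theorem cerny_reset_length (n : ℕ) [NeZero n] (hn : 1 < n) :
    (∃ w : List Bool, w.length = (n - 1) ^ 2 ∧ IsResetFrom (cernyStep n) Finset.univ w) ∧
      ∀ w : List Bool, IsResetFrom (cernyStep n) Finset.univ w → (n - 1) ^ 2 ≤ w.length :=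
  ⟨⟨Cerny.cernyResetWord n, Cerny.length_cernyResetWord hn,
      Cerny.isResetFrom_cernyResetWord hn⟩,
    fun _ => Cerny.sq_le_length_of_isResetFrom⟩
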